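/- Let a and b be pure elements of the Cayley–Dickson algebra A_n with ‖a‖ = ‖b‖ = 1, ⟨a,b⟩ = 0, and suppose a alternates strongly with b, i.e. (a,a,b) = 0 and (a,b,b) = 0. Then {e₀, a, b, ab} is an orthonormal set, the linear span V(a;b) of {e₀, a, b, ab} is closed under multiplication, and the correspondence e₀ ↦ e₀, e₁ ↦ a, e₂ ↦ b, e₃ ↦ ab is an algebra isomorphism from the quaternions A_2 = ℍ onto V(a;b). -/

import Mathlib

noncomputable section

/-- The Cayley–Dickson algebra `A n` of dimension `2^n` over `ℝ`:
`A 0 = ℝ` and `A (n+1) = A n × A n`. -/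
def CD : ℕ → Type
  | 0 => ℝ
  | n + 1 => CD n × CD n

namespace CD

instance instAddCommGroup : (n : ℕ) → AddCommGroup (CD n)
  | 0 => inferInstanceAs (AddCommGroup ℝ)
  | n + 1 =>
    letI := instAddCommGroup n
    inferInstanceAs (AddCommGroup (CD n × CD n))

instance instModule : (n : ℕ) → Module ℝ (CD n)
  | 0 => inferInstanceAs (Module ℝ ℝ)
  | n + 1 =>
    letI := instAddCommGroup n
    letI := instModule n
    inferInstanceAs (Module ℝ (CD n × CD n))

/-- Conjugation: `x̄ = x` on `ℝ` and `(x₁,x₂)‾ = (x̄₁, -x₂)`. -/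
protected def conj : {n : ℕ} → CD n → CD n
  | 0, x => x
  | _ + 1, x => (CD.conj x.1, -x.2)

/-- Cayley–Dickson multiplication: `(a,b)(x,y) = (ax - ȳb, ya + bx̄)`. -/
protected def mul : {n : ℕ} → CD n → CD n → CD n
  | 0, x, y => (show ℝ from x) * (show ℝ from y)
  | _ + 1, x, y =>
    (CD.mul x.1 y.1 - CD.mul (CD.conj y.2) x.2,
     CD.mul y.2 x.1 + CD.mul x.2 (CD.conj y.1))

instance instMul (n : ℕ) : Mul (CD n) := ⟨CD.mul⟩

/-- The multiplicative unit `e₀` of `A n`. -/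
def e0 : (n : ℕ) → CD n
  | 0 => (1 : ℝ)
  | n + 1 => (e0 n, 0)

/-- The element `ẽ₀ = (0, e₀)` of `A n` (junk value `0` for `n = 0`). -/
def te0 : (n : ℕ) → CD n
  | 0 => 0
  | n + 1 => (0, e0 n)

/-- The "complexification" `α̃ = (-b, a)` of `α = (a,b)` (junk value `0` for `n = 0`);
note `α̃ = α·ẽ₀`. -/
def tilde : {n : ℕ} → CD n → CD n
  | 0, _ => 0
  | _ + 1, x => (-x.2, x.1)

/-- The standard inner product on `A n ≅ ℝ^{2^n}`. -/
protected def inner : {n : ℕ} → CD n → CD n → ℝ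
  | 0, x, y => (show ℝ from x) * (show ℝ from y)
  | _ + 1, x, y => CD.inner x.1 y.1 + CD.inner x.2 y.2

/-- The euclidean norm on `A n`. -/
protected def norm {n : ℕ} (x : CD n) : ℝ := Real.sqrt (CD.inner x x)

/-- `x` is pure if its trace `t(x) = x + x̄` vanishes. -/
def IsPure {n : ℕ} (x : CD n) : Prop := x + CD.conj x = 0

/-- `x = (a,b)` is doubly pure if both `a` and `b` are pure
(equivalently, both `x` and `x̃` are pure). -/
def IsDoublyPure : {n : ℕ} → CD n → Prop
  | 0, x => x = 0
  | _ + 1, x => IsPure x.1 ∧ IsPure x.2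

/-- The associator `(x,y,z) = (xy)z - x(yz)`. -/
def assoc {n : ℕ} (x y z : CD n) : CD n := (x * y) * z - x * (y * z)

/-- The subspace `ℍ_a`: the real span of `{e₀, ã, a, ẽ₀}`. -/
def Ha {n : ℕ} (a : CD n) : Submodule ℝ (CD n) :=
  Submodule.span ℝ {e0 n, tilde a, a, te0 n}

/-- The orthogonal complement `ℍ_a^⊥` of `ℍ_a` in `A n`. -/
def HaPerp {n : ℕ} (a : CD n) : Set (CD n) :=
  {x | ∀ y ∈ Ha a, CD.inner x y = 0}

/-- The element `ε = (ẽ₀, 0)` of `A (n+1)`. -/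
def eps (n : ℕ) : CD (n + 1) := (te0 n, 0)

/-- `α̂ = (b,a)` for `α = (a,b) ∈ A (n+1)`. -/
def hat {n : ℕ} (x : CD (n + 1)) : CD (n + 1) := (x.2, x.1)

/-- The element `(a, b)` of `A (n+1) = A n × A n`. -/
def pair {n : ℕ} (a b : CD n) : CD (n + 1) := (a, b)

end CD

/-- The canonical basis vector `e₁` of `A 2 = ℍ`. -/
def q1 : CD 2 := (CD.te0 1, 0)
/-- The canonical basis vector `e₂` of `A 2 = ℍ`. -/
def q2 : CD 2 := (0, CD.e0 1)
/-- The canonical basis vector `e₃` of `A 2 = ℍ`. -/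
def q3 : CD 2 := (0, CD.te0 1)

/-!
For pure `x`, `x x̄ = ‖x‖² e₀` gives `x² = -‖x‖² e₀`; polarising, orthogonal pure `a`, `b`
anticommute, so `ab` is pure. The hypotheses `(a,a,b) = (a,b,b) = 0` give `a(ab) = -b` and
`(ab)b = -a`; since conjugation turns `(x,y,z)` into `(z,y,x)` when `x, y, z` are pure, also
`(b,a,a) = (b,b,a) = 0`, whence `(ab)a = b` and `b(ab) = a`, `‖ab‖ = ‖b‖` and `(ab)² = -e₀`.
This is Hamilton's table for `1, i, j, k`, so `V(a;b)` is closed under multiplication and the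
linear map `ℍ → V(a;b)` is multiplicative. It is injective because `z z̄ = ‖z‖² e₀` in `ℍ`.
-/

namespace CD

variable {n : ℕ}

lemma mul_def (x y : CD (n + 1)) :
    x * y = (x.1 * y.1 - CD.conj y.2 * x.2, y.2 * x.1 + x.2 * CD.conj y.1) := rfl
lemma add_def (x y : CD (n + 1)) : x + y = (x.1 + y.1, x.2 + y.2) := rfl
lemma smul_def (r : ℝ) (x : CD (n + 1)) : r • x = (r • x.1, r • x.2) := rfl
lemma conj_def (x : CD (n + 1)) : CD.conj x = (CD.conj x.1, -x.2) := rfl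
lemma inner_def (x y : CD (n + 1)) : CD.inner x y = CD.inner x.1 y.1 + CD.inner x.2 y.2 := rfl

lemma mk_congr {x₁ x₂ y₁ y₂ : CD n} (h₁ : x₁ = y₁) (h₂ : x₂ = y₂) :
    ((x₁, x₂) : CD (n + 1)) = (y₁, y₂) := by
  rw [h₁, h₂]

lemma conj_add : ∀ {n : ℕ} (x y : CD n), CD.conj (x + y) = CD.conj x + CD.conj y
  | 0, _, _ => rfl
  | _ + 1, x, y => mk_congr (conj_add x.1 y.1) (neg_add x.2 y.2)

lemma conj_smul : ∀ {n : ℕ} (r : ℝ) (x : CD n), CD.conj (r • x) = r • CD.conj x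
  | 0, _, _ => rfl
  | _ + 1, r, x => mk_congr (conj_smul r x.1) (smul_neg r x.2).symm

def conjₗ (n : ℕ) : CD n →ₗ[ℝ] CD n where
  toFun := CD.conj
  map_add' := conj_add
  map_smul' := conj_smul

lemma conj_neg (x : CD n) : CD.conj (-x) = -CD.conj x := map_neg (conjₗ n) x
lemma conj_sub (x y : CD n) : CD.conj (x - y) = CD.conj x - CD.conj y := map_sub (conjₗ n) x y
lemma conj_zero : CD.conj (0 : CD n) = 0 := map_zero (conjₗ n)

lemma conj_conj : ∀ {n : ℕ} (x : CD n), CD.conj (CD.conj x) = x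
  | 0, _ => rfl
  | _ + 1, x => mk_congr (conj_conj x.1) (neg_neg x.2)

lemma conj_e0 : ∀ {n : ℕ}, CD.conj (e0 n) = e0 n
  | 0 => rfl
  | _ + 1 => mk_congr conj_e0 neg_zero

mutual

protected lemma add_mul : ∀ {n : ℕ} (x y z : CD n), (x + y) * z = x * z + y * z
  | 0, x, y, z => _root_.add_mul (show ℝ from x) (show ℝ from y) (show ℝ from z)
  | _ + 1, x, y, z => by
    simp only [↓mul_def, ↓add_def, CD.add_mul, CD.mul_add]
    exact mk_congr (by abel) (by abel)

protected lemma mul_add : ∀ {n : ℕ} (x y z : CD n), x * (y + z) = x * y + x * z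
  | 0, x, y, z => _root_.mul_add (show ℝ from x) (show ℝ from y) (show ℝ from z)
  | _ + 1, x, y, z => by
    simp only [↓mul_def, ↓add_def, conj_add, CD.add_mul, CD.mul_add]
    exact mk_congr (by abel) (by abel)

end

mutual

protected lemma smul_mul : ∀ {n : ℕ} (r : ℝ) (x y : CD n), (r • x) * y = r • (x * y)
  | 0, r, x, y => mul_assoc r (show ℝ from x) (show ℝ from y)
  | _ + 1, r, x, y => by
    simp only [↓mul_def, ↓smul_def, CD.smul_mul, CD.mul_smul, smul_sub, smul_add]
    rfl

protected lemma mul_smul : ∀ {n : ℕ} (r : ℝ) (x y : CD n), x * (r • y) = r • (x * y)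
  | 0, r, x, y => mul_left_comm (show ℝ from x) r (show ℝ from y)
  | _ + 1, r, x, y => by
    simp only [↓mul_def, ↓smul_def, conj_smul, CD.smul_mul, CD.mul_smul, smul_sub, smul_add]
    rfl

end

def mulₗ (n : ℕ) : CD n →ₗ[ℝ] CD n →ₗ[ℝ] CD n :=
  LinearMap.mk₂ ℝ (· * ·) CD.add_mul CD.smul_mul CD.mul_add CD.mul_smul

protected lemma neg_mul (x y : CD n) : -x * y = -(x * y) := (mulₗ n).map_neg₂ x y
protected lemma mul_neg (x y : CD n) : x * -y = -(x * y) := (mulₗ n x).map_neg y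
protected lemma zero_mul (x : CD n) : 0 * x = 0 := (mulₗ n).map_zero₂ x
protected lemma mul_zero (x : CD n) : x * 0 = 0 := (mulₗ n x).map_zero

lemma mul_e0 : ∀ {n : ℕ} (x : CD n), x * e0 n = x
  | 0, x => mul_one (show ℝ from x)
  | _ + 1, x => by
    simp only [↓mul_def, ↓e0, conj_zero, conj_e0, mul_e0, CD.zero_mul, sub_zero, zero_add]
    exact Prod.mk.eta

lemma e0_mul : ∀ {n : ℕ} (x : CD n), e0 n * x = x
  | 0, x => one_mul (show ℝ from x)
  | _ + 1, x => by
    simp only [↓mul_def, ↓e0, e0_mul, mul_e0, CD.mul_zero, CD.zero_mul, sub_zero, add_zero]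
    exact Prod.mk.eta

lemma conj_mul : ∀ {n : ℕ} (x y : CD n), CD.conj (x * y) = CD.conj y * CD.conj x
  | 0, x, y => mul_comm (show ℝ from x) (show ℝ from y)
  | _ + 1, x, y => by
    simp only [↓conj_def, ↓mul_def, conj_sub, conj_neg, conj_conj, conj_mul,
      CD.neg_mul, CD.mul_neg, neg_neg]
    exact mk_congr (by abel) (by abel)

lemma inner_add_left : ∀ {n : ℕ} (x y z : CD n),
    CD.inner (x + y) z = CD.inner x z + CD.inner y z
  | 0, x, y, z => _root_.add_mul (show ℝ from x) (show ℝ from y) (show ℝ from z)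
  | _ + 1, x, y, z => by
    simp only [↓inner_def, ↓add_def, inner_add_left]
    ring

lemma inner_smul_left : ∀ {n : ℕ} (r : ℝ) (x y : CD n),
    CD.inner (r • x) y = r * CD.inner x y
  | 0, r, x, y => mul_assoc r (show ℝ from x) (show ℝ from y)
  | _ + 1, r, x, y => by
    simp only [↓inner_def, ↓smul_def, inner_smul_left]
    ring

lemma inner_comm : ∀ {n : ℕ} (x y : CD n), CD.inner x y = CD.inner y x
  | 0, x, y => mul_comm (show ℝ from x) (show ℝ from y)
  | _ + 1, x, y => by
    simp only [inner_def, inner_comm x.1, inner_comm x.2]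

lemma inner_add_right (x y z : CD n) : CD.inner x (y + z) = CD.inner x y + CD.inner x z := by
  simp only [inner_comm x, inner_add_left]

lemma inner_smul_right (r : ℝ) (x y : CD n) : CD.inner x (r • y) = r * CD.inner x y := by
  simp only [inner_comm x, inner_smul_left]

def innerₗ (n : ℕ) : CD n →ₗ[ℝ] CD n →ₗ[ℝ] ℝ :=
  LinearMap.mk₂ ℝ CD.inner inner_add_left inner_smul_left inner_add_right inner_smul_right

lemma inner_neg_left (x y : CD n) : CD.inner (-x) y = -CD.inner x y := (innerₗ n).map_neg₂ x y
lemma inner_neg_right (x y : CD n) : CD.inner x (-y) = -CD.inner x y := (innerₗ n x).map_neg y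
lemma inner_sub_left (x y z : CD n) : CD.inner (x - y) z = CD.inner x z - CD.inner y z :=
  (innerₗ n).map_sub₂ x y z
lemma inner_sub_right (x y z : CD n) : CD.inner x (y - z) = CD.inner x y - CD.inner x z :=
  (innerₗ n x).map_sub y z
lemma inner_zero_left (x : CD n) : CD.inner 0 x = 0 := (innerₗ n).map_zero₂ x

lemma inner_e0_e0 : ∀ {n : ℕ}, CD.inner (e0 n) (e0 n) = 1
  | 0 => mul_one (1 : ℝ)
  | _ + 1 => by
    simp only [↓inner_def, ↓e0, inner_e0_e0, inner_zero_left, add_zero]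

lemma inner_conj_conj : ∀ {n : ℕ} (x y : CD n), CD.inner (CD.conj x) (CD.conj y) = CD.inner x y
  | 0, _, _ => rfl
  | _ + 1, x, y => by
    simp only [↓inner_def, ↓conj_def, inner_conj_conj, inner_neg_left, inner_neg_right, neg_neg]

lemma inner_conj_left (x y : CD n) : CD.inner (CD.conj x) y = CD.inner x (CD.conj y) := by
  rw [← inner_conj_conj x (CD.conj y), conj_conj]

mutual

lemma inner_mul_left : ∀ {n : ℕ} (a x y : CD n),
    CD.inner (a * x) y = CD.inner x (CD.conj a * y)
  | 0, a, x, y => (by intros; ring : ∀ a x y : ℝ, a * x * y = x * (a * y)) a x y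
  | _ + 1, a, x, y => by
    have h₁ : CD.inner (a.2 * CD.conj x.1) y.2 = CD.inner x.1 (CD.conj y.2 * a.2) := by
      rw [inner_mul_left, inner_conj_left, conj_mul, conj_conj]
    have h₂ : CD.inner (CD.conj x.2 * a.2) y.1 = CD.inner x.2 (a.2 * CD.conj y.1) := by
      rw [inner_mul_left, conj_conj, inner_comm, inner_mul_right]
    simp only [↓mul_def, ↓conj_def, ↓inner_def, inner_sub_left, inner_add_left, inner_sub_right,
      inner_add_right, CD.mul_neg, CD.neg_mul, inner_neg_right, inner_mul_left a.1,
      inner_mul_right a.1]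
    linarith

lemma inner_mul_right : ∀ {n : ℕ} (a x y : CD n),
    CD.inner (x * a) y = CD.inner x (y * CD.conj a)
  | 0, a, x, y => (by intros; ring : ∀ a x y : ℝ, x * a * y = x * (y * a)) a x y
  | _ + 1, a, x, y => by
    have h₁ : CD.inner (x.2 * CD.conj a.1) y.2 = CD.inner x.2 (y.2 * a.1) := by
      rw [inner_mul_right, conj_conj]
    have h₂ : CD.inner (CD.conj a.2 * x.2) y.1 = CD.inner x.2 (a.2 * y.1) := by
      rw [inner_mul_left, conj_conj]
    simp only [↓mul_def, ↓conj_def, ↓inner_def, inner_sub_left, inner_add_left, inner_sub_right,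
      inner_add_right, CD.neg_mul, inner_neg_right, conj_neg, conj_conj,
      inner_mul_right a.1, inner_mul_left a.2]
    linarith

end

lemma conj_mul_self : ∀ {n : ℕ} (x : CD n), CD.conj x * x = CD.inner x x • e0 n
  | 0, x => (by intro; ring : ∀ x : ℝ, x * x = x * x * 1) x
  | _ + 1, x => by
    simp only [↓mul_def, ↓conj_def, ↓inner_def, ↓e0, ↓smul_def, CD.neg_mul,
      CD.mul_neg, sub_neg_eq_add, smul_zero, add_smul, conj_mul_self x.1, conj_mul_self x.2]
    exact mk_congr rfl (add_neg_cancel _)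

lemma mul_conj_self : ∀ {n : ℕ} (x : CD n), x * CD.conj x = CD.inner x x • e0 n
  | 0, x => (by intro; ring : ∀ x : ℝ, x * x = x * x * 1) x
  | _ + 1, x => by
    simp only [↓mul_def, ↓conj_def, ↓inner_def, ↓e0, ↓smul_def, conj_neg, conj_conj,
      CD.neg_mul, sub_neg_eq_add, smul_zero, add_smul, mul_conj_self x.1, conj_mul_self x.2]
    exact mk_congr rfl (neg_add_cancel _)

lemma add_conj : ∀ {n : ℕ} (x : CD n), x + CD.conj x = (2 * CD.inner x (e0 n)) • e0 n
  | 0, x => (by intro; ring : ∀ x : ℝ, x + x = 2 * (x * 1) * 1) x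
  | _ + 1, x => by
    simp only [↓add_def, ↓conj_def, ↓e0, ↓inner_def, ↓smul_def, inner_comm x.2 0, inner_zero_left,
      add_zero, smul_zero, add_conj x.1]
    exact mk_congr rfl (add_neg_cancel _)

lemma inner_self_nonneg : ∀ {n : ℕ} (x : CD n), 0 ≤ CD.inner x x
  | 0, x => mul_self_nonneg (show ℝ from x)
  | _ + 1, x => add_nonneg (inner_self_nonneg x.1) (inner_self_nonneg x.2)

lemma eq_zero_of_inner_self_eq_zero : ∀ {n : ℕ} {x : CD n}, CD.inner x x = 0 → x = 0
  | 0, x, h => mul_self_eq_zero.1 h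
  | _ + 1, x, h => by
    obtain ⟨h₁, h₂⟩ := (add_eq_zero_iff_of_nonneg (inner_self_nonneg x.1)
      (inner_self_nonneg x.2)).1 h
    exact mk_congr (eq_zero_of_inner_self_eq_zero h₁) (eq_zero_of_inner_self_eq_zero h₂)

lemma e0_ne_zero : e0 n ≠ 0 := by
  intro h
  simpa [h, inner_zero_left] using inner_e0_e0 (n := n)

lemma norm_eq_one_iff {x : CD n} : CD.norm x = 1 ↔ CD.inner x x = 1 := Real.sqrt_eq_one

lemma norm_e0 : CD.norm (e0 n) = 1 := norm_eq_one_iff.2 inner_e0_e0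

lemma inner_self_mul_left (a b : CD n) : CD.inner a (a * b) = CD.inner a a * CD.inner (e0 n) b := by
  rw [inner_comm, inner_mul_left, conj_mul_self, inner_smul_right, inner_comm b]

lemma inner_self_mul_right (a b : CD n) :
    CD.inner b (a * b) = CD.inner b b * CD.inner (e0 n) a := by
  rw [inner_comm, inner_mul_right, mul_conj_self, inner_smul_right, inner_comm a]

namespace IsPure

variable {x y z : CD n}

lemma conj_eq (hx : IsPure x) : CD.conj x = -x := eq_neg_of_add_eq_zero_right hx

lemma e0_inner (hx : IsPure x) : CD.inner (e0 n) x = 0 := by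
  have h := congrArg (CD.inner (e0 n)) (add_conj x)
  rw [hx, inner_comm (e0 n) 0, inner_zero_left, inner_smul_right, inner_e0_e0,
    inner_comm] at h
  linarith

lemma mul_self (hx : IsPure x) : x * x = -(CD.inner x x • e0 n) := by
  rw [← mul_conj_self, hx.conj_eq, CD.mul_neg, neg_neg]

lemma add (hx : IsPure x) (hy : IsPure y) : IsPure (x + y) := by
  rw [IsPure, conj_add, hx.conj_eq, hy.conj_eq]
  abel

lemma mul_add_mul_swap (hx : IsPure x) (hy : IsPure y) :
    x * y + y * x = -((2 * CD.inner x y) • e0 n) := by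
  have h := (hx.add hy).mul_self
  rw [CD.add_mul, CD.mul_add, CD.mul_add, hx.mul_self, hy.mul_self, inner_add_left,
    inner_add_right, inner_add_right, inner_comm y x] at h
  linear_combination (norm := module) h

lemma mul (hx : IsPure x) (hy : IsPure y) (hxy : y * x = -(x * y)) : IsPure (x * y) := by
  rw [IsPure, conj_mul, hx.conj_eq, hy.conj_eq, CD.neg_mul, CD.mul_neg, neg_neg, hxy,
    add_neg_cancel]

lemma assoc_rev (hx : IsPure x) (hy : IsPure y) (hz : IsPure z) :
    assoc z y x = CD.conj (assoc x y z) := by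
  simp only [assoc, conj_sub, conj_mul, hx.conj_eq, hy.conj_eq, hz.conj_eq, CD.neg_mul,
    CD.mul_neg, neg_neg, neg_sub_neg]

end IsPure

lemma mul_mem_span_of_forall_mul_mem {s : Set (CD n)}
    (hs : ∀ x ∈ s, ∀ y ∈ s, x * y ∈ Submodule.span ℝ s) :
    ∀ x ∈ Submodule.span ℝ s, ∀ y ∈ Submodule.span ℝ s, x * y ∈ Submodule.span ℝ s := by
  intro x hx y hy
  have h := Submodule.apply_mem_map₂ (mulₗ n) hx hy
  rw [Submodule.map₂_span_span] at h
  refine Submodule.span_le.2 ?_ h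
  rintro _ ⟨x, hx, y, hy, rfl⟩
  exact hs x hx y hy

section StrongAlternation

variable {a b : CD n}

lemma mul_mul_of_assoc_eq_zero (ha : IsPure a) (haa : CD.inner a a = 1)
    (h : assoc a a b = 0) : a * (a * b) = -b := by
  rw [← sub_eq_zero.1 h, ha.mul_self, haa, one_smul, CD.neg_mul, e0_mul]

lemma inner_mul_self_of_assoc_eq_zero (ha : IsPure a) (haa : CD.inner a a = 1)
    (h : assoc a a b = 0) : CD.inner (a * b) (a * b) = CD.inner b b := by
  rw [inner_mul_left, ha.conj_eq, CD.neg_mul, mul_mul_of_assoc_eq_zero ha haa h, neg_neg]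

structure IsQuaternionPair (a b : CD n) : Prop where
  sq_a : a * a = -e0 n
  sq_b : b * b = -e0 n
  b_mul_a : b * a = -(a * b)
  a_mul_ab : a * (a * b) = -b
  ab_mul_a : a * b * a = b
  b_mul_ab : b * (a * b) = a
  ab_mul_b : a * b * b = -a
  sq_ab : a * b * (a * b) = -e0 n

lemma isQuaternionPair_of_assoc_eq_zero (ha : IsPure a) (hb : IsPure b)
    (haa : CD.inner a a = 1) (hbb : CD.inner b b = 1) (hab : CD.inner a b = 0)
    (h₁ : assoc a a b = 0) (h₂ : assoc a b b = 0) : IsQuaternionPair a b := by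
  have sq_a : a * a = -e0 n := by rw [ha.mul_self, haa, one_smul]
  have sq_b : b * b = -e0 n := by rw [hb.mul_self, hbb, one_smul]
  have b_mul_a : b * a = -(a * b) := by
    refine eq_neg_of_add_eq_zero_right ?_
    rw [ha.mul_add_mul_swap hb, hab, mul_zero, zero_smul, neg_zero]
  have h₃ : assoc b a a = 0 := by rw [ha.assoc_rev ha hb, h₁, conj_zero]
  have h₄ : assoc b b a = 0 := by rw [ha.assoc_rev hb hb, h₂, conj_zero]
  have hab_pure : IsPure (a * b) := ha.mul hb b_mul_a
  refine ⟨sq_a, sq_b, b_mul_a, mul_mul_of_assoc_eq_zero ha haa h₁, ?_, ?_, ?_, ?_⟩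
  · rw [← neg_neg (a * b), ← b_mul_a, CD.neg_mul, sub_eq_zero.1 h₃, sq_a, CD.mul_neg, mul_e0,
      neg_neg]
  · rw [← neg_neg (a * b), ← b_mul_a, CD.mul_neg, ← sub_eq_zero.1 h₄, sq_b, CD.neg_mul, e0_mul,
      neg_neg]
  · rw [sub_eq_zero.1 h₂, sq_b, CD.mul_neg, mul_e0]
  · rw [hab_pure.mul_self, inner_mul_self_of_assoc_eq_zero ha haa h₁, hbb, one_smul]

lemma IsQuaternionPair.mul_mem_span (hq : IsQuaternionPair a b) :
    ∀ x ∈ Submodule.span ℝ {e0 n, a, b, a * b}, ∀ y ∈ Submodule.span ℝ {e0 n, a, b, a * b},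
      x * y ∈ Submodule.span ℝ {e0 n, a, b, a * b} := by
  refine mul_mem_span_of_forall_mul_mem fun x hx y hy => ?_
  rcases hx with rfl | rfl | rfl | rfl <;> rcases hy with rfl | rfl | rfl | rfl <;>
    (try simp only [e0_mul, mul_e0, hq.sq_a, hq.sq_b, hq.b_mul_a, hq.a_mul_ab, hq.ab_mul_a,
      hq.b_mul_ab, hq.ab_mul_b, hq.sq_ab, Submodule.neg_mem_iff]) <;>
    exact Submodule.subset_span (by simp)

end StrongAlternation

-- Coordinates with respect to the basis `e0 2, q1, q2, q3` of `A 2 = ℍ`.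
def re (x : CD 2) : ℝ := x.1.1
def imI (x : CD 2) : ℝ := x.1.2
def imJ (x : CD 2) : ℝ := x.2.1
def imK (x : CD 2) : ℝ := x.2.2

lemma re_mul (x y : CD 2) :
    re (x * y) = re x * re y - imI x * imI y - imJ x * imJ y - imK x * imK y := by
  show re x * re y - imI y * imI x - (imJ y * imJ x - imK x * -imK y) = _
  ring

lemma imI_mul (x y : CD 2) :
    imI (x * y) = re x * imI y + imI x * re y + imJ x * imK y - imK x * imJ y := by
  show imI y * re x + imI x * re y - (imK x * imJ y + -imK y * imJ x) = _
  ring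

lemma imJ_mul (x y : CD 2) :
    imJ (x * y) = re x * imJ y - imI x * imK y + imJ x * re y + imK x * imI y := by
  show imJ y * re x - imI x * imK y + (imJ x * re y - -imI y * imK x) = _
  ring

lemma imK_mul (x y : CD 2) :
    imK (x * y) = re x * imK y + imI x * imJ y - imJ x * imI y + imK x * re y := by
  show imI x * imJ y + imK y * re x + (-imI y * imJ x + imK x * re y) = _
  ring

def quatMap (a b : CD n) : CD 2 →ₗ[ℝ] CD n where
  toFun x := re x • e0 n + imI x • a + imJ x • b + imK x • (a * b)
  map_add' x y := by
    change (re x + re y) • _ + (imI x + imI y) • _ + (imJ x + imJ y) • _ + (imK x + imK y) • _ = _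
    module
  map_smul' r x := by
    change (r * re x) • _ + (r * imI x) • _ + (r * imJ x) • _ + (r * imK x) • _ = _
    simp only [RingHom.id_apply]
    module

lemma quatMap_apply (a b : CD n) (x : CD 2) :
    quatMap a b x = re x • e0 n + imI x • a + imJ x • b + imK x • (a * b) := rfl

section QuatMap

variable (a b : CD n)

lemma quatMap_e0 : quatMap a b (e0 2) = e0 n := by
  show (1 : ℝ) • e0 n + (0 : ℝ) • a + (0 : ℝ) • b + (0 : ℝ) • (a * b) = e0 n
  module

lemma quatMap_q1 : quatMap a b q1 = a := by
  show (0 : ℝ) • e0 n + (1 : ℝ) • a + (0 : ℝ) • b + (0 : ℝ) • (a * b) = a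
  module

lemma quatMap_q2 : quatMap a b q2 = b := by
  show (0 : ℝ) • e0 n + (0 : ℝ) • a + (1 : ℝ) • b + (0 : ℝ) • (a * b) = b
  module

lemma quatMap_q3 : quatMap a b q3 = a * b := by
  show (0 : ℝ) • e0 n + (0 : ℝ) • a + (0 : ℝ) • b + (1 : ℝ) • (a * b) = a * b
  module

lemma range_quatMap :
    LinearMap.range (quatMap a b) = Submodule.span ℝ {e0 n, a, b, a * b} := by
  apply le_antisymm
  · rintro _ ⟨x, rfl⟩
    rw [quatMap_apply]
    refine add_mem (add_mem (add_mem ?_ ?_) ?_) ?_ <;>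
      exact Submodule.smul_mem _ _ (Submodule.subset_span (by simp))
  · rw [Submodule.span_le]
    rintro _ (rfl | rfl | rfl | rfl)
    exacts [⟨e0 2, quatMap_e0 _ _⟩, ⟨q1, quatMap_q1 _ _⟩, ⟨q2, quatMap_q2 _ _⟩,
      ⟨q3, quatMap_q3 _ _⟩]

end QuatMap

lemma IsQuaternionPair.quatMap_mul {a b : CD n} (hq : IsQuaternionPair a b) (x y : CD 2) :
    quatMap a b (x * y) = quatMap a b x * quatMap a b y := by
  simp only [quatMap_apply, re_mul, imI_mul, imJ_mul, imK_mul, CD.add_mul, CD.mul_add,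
    CD.smul_mul, CD.mul_smul, e0_mul, mul_e0, hq.sq_a, hq.sq_b, hq.b_mul_a, hq.a_mul_ab,
    hq.ab_mul_a, hq.b_mul_ab, hq.ab_mul_b, hq.sq_ab]
  module

lemma injective_of_map_mul {m : ℕ} (φ : CD m →ₗ[ℝ] CD n) (h₁ : φ (e0 m) = e0 n)
    (hmul : ∀ x y, φ (x * y) = φ x * φ y) : Function.Injective φ := by
  refine (injective_iff_map_eq_zero φ).2 fun z hz => eq_zero_of_inner_self_eq_zero ?_
  have h := hmul z (CD.conj z)
  rw [mul_conj_self, map_smul, h₁, hz, CD.zero_mul] at h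
  exact (smul_eq_zero.1 h).resolve_right e0_ne_zero

end CD

/-- If `a`, `b` are pure elements of `A n` with `‖a‖ = ‖b‖ = 1`,
`⟨a,b⟩ = 0`, and `a` alternates strongly with `b` (`(a,a,b) = 0` and `(a,b,b) = 0`),
then `{e₀, a, b, ab}` is an orthonormal set, its span `V(a;b)` is closed under
multiplication, and `e₀ ↦ e₀`, `e₁ ↦ a`, `e₂ ↦ b`, `e₃ ↦ ab` defines an algebra
isomorphism from `A 2 = ℍ` onto `V(a;b)`. -/
theorem statement17 (n : ℕ) (a b : CD n)
    (hpa : CD.IsPure a) (hpb : CD.IsPure b)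
    (hna : CD.norm a = 1) (hnb : CD.norm b = 1) (hab : CD.inner a b = 0)
    (h1 : CD.assoc a a b = 0) (h2 : CD.assoc a b b = 0) :
    (CD.norm (CD.e0 n) = 1 ∧ CD.norm (a * b) = 1 ∧
      CD.inner (CD.e0 n) a = 0 ∧ CD.inner (CD.e0 n) b = 0 ∧
      CD.inner (CD.e0 n) (a * b) = 0 ∧
      CD.inner a (a * b) = 0 ∧ CD.inner b (a * b) = 0) ∧
    (∀ x ∈ Submodule.span ℝ {CD.e0 n, a, b, a * b},
      ∀ y ∈ Submodule.span ℝ {CD.e0 n, a, b, a * b},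
        x * y ∈ Submodule.span ℝ {CD.e0 n, a, b, a * b}) ∧
    (∃ φ : CD 2 →ₗ[ℝ] CD n, Function.Injective φ ∧
      LinearMap.range φ = Submodule.span ℝ {CD.e0 n, a, b, a * b} ∧
      φ (CD.e0 2) = CD.e0 n ∧ φ q1 = a ∧ φ q2 = b ∧ φ q3 = a * b ∧
      ∀ x y : CD 2, φ (x * y) = φ x * φ y) := by
  have haa := CD.norm_eq_one_iff.1 hna
  have hbb := CD.norm_eq_one_iff.1 hnb
  have hq := CD.isQuaternionPair_of_assoc_eq_zero hpa hpb haa hbb hab h1 h2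
  have hpab : CD.IsPure (a * b) := hpa.mul hpb hq.b_mul_a
  refine ⟨⟨CD.norm_e0, ?_, hpa.e0_inner, hpb.e0_inner, hpab.e0_inner, ?_, ?_⟩, hq.mul_mem_span,
    CD.quatMap a b, CD.injective_of_map_mul _ (CD.quatMap_e0 a b) hq.quatMap_mul,
    CD.range_quatMap a b, CD.quatMap_e0 a b, CD.quatMap_q1 a b, CD.quatMap_q2 a b,
    CD.quatMap_q3 a b, hq.quatMap_mul⟩
  · rw [CD.norm_eq_one_iff, CD.inner_mul_self_of_assoc_eq_zero hpa haa h1, hbb]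
  · rw [CD.inner_self_mul_left, hpb.e0_inner, mul_zero]
  · rw [CD.inner_self_mul_right, hpa.e0_inner, mul_zero]
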